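/- arXiv:2010.16232 — 4 statements merged into one kernel-verified Lean document; each statement's English description precedes it below -/
import Mathlib

section
/- Let θ ∈ (−π/2, π/2), r > 0, d > 0, M > 0 be reals. Then ∫ x in (−M*d/(2*r))..(M*d/(2*r)), 1/(1 − 2*x*sin θ + x²) dx = (1/cos θ) * (arctan (M*d/(2*r*cos θ) − tan θ) + arctan (M*d/(2*r*cos θ) + tan θ)). -/
/-! Completing the square, `1 - 2 x sin θ + x² = (x - sin θ)² + cos² θ`, so the integrand has
antiderivative `arctan ((x - sin θ) / cos θ) / cos θ`; on a symmetric interval the two endpoint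
values combine by oddness of `arctan`. -/

open Real

theorem one_sub_two_mul_sin_add_sq (θ x : ℝ) :
    1 - 2 * x * sin θ + x ^ 2 = (x - sin θ) ^ 2 + cos θ ^ 2 := by
  linear_combination -sin_sq_add_cos_sq θ

theorem hasDerivAt_arctan_sub_div_div {a c : ℝ} (hc : c ≠ 0) (x : ℝ) :
    HasDerivAt (fun x => arctan ((x - a) / c) / c) (1 / ((x - a) ^ 2 + c ^ 2)) x := by
  have hlin : HasDerivAt (fun x => (x - a) / c) (1 / c) x := by
    simpa using ((hasDerivAt_id x).sub_const a).div_const c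
  refine (((hasDerivAt_arctan _).comp x hlin).div_const c).congr_deriv ?_
  field_simp
  ring

theorem integral_one_div_sub_sq_add_sq {a c : ℝ} (hc : c ≠ 0) (u v : ℝ) :
    ∫ x in u..v, 1 / ((x - a) ^ 2 + c ^ 2) =
      (arctan ((v - a) / c) - arctan ((u - a) / c)) / c := by
  have hpos : ∀ x : ℝ, (x - a) ^ 2 + c ^ 2 ≠ 0 := fun x => by positivity
  have hcont : Continuous fun x : ℝ => 1 / ((x - a) ^ 2 + c ^ 2) := by
    fun_prop (disch := exact hpos _)
  rw [intervalIntegral.integral_eq_sub_of_hasDerivAt (fun x _ => hasDerivAt_arctan_sub_div_div hc x)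
    (hcont.intervalIntegrable u v), ← sub_div]

theorem integral_one_div_sub_sq_add_sq_symmetric {a c : ℝ} (hc : c ≠ 0) (b : ℝ) :
    ∫ x in -b..b, 1 / ((x - a) ^ 2 + c ^ 2) =
      (arctan (b / c - a / c) + arctan (b / c + a / c)) / c := by
  rw [integral_one_div_sub_sq_add_sq hc, show -b - a = -(b + a) by ring, neg_div, arctan_neg,
    sub_div b, add_div b]
  ring

theorem integral_snr_closed_form_general (θ r d M : ℝ)
    (hθ : θ ∈ Set.Ioo (-(π / 2)) (π / 2)) :
    ∫ x in (-(M * d / (2 * r)))..(M * d / (2 * r)), 1 / (1 - 2 * x * sin θ + x ^ 2) =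
      (1 / cos θ) * (arctan (M * d / (2 * r * cos θ) - tan θ) +
        arctan (M * d / (2 * r * cos θ) + tan θ)) := by
  have hc : cos θ ≠ 0 := (cos_pos_of_mem_Ioo hθ).ne'
  simp_rw [one_sub_two_mul_sin_add_sq, integral_one_div_sub_sq_add_sq_symmetric hc, ← tan_eq_sin_div_cos,
    div_div, one_div_mul_eq_div]

theorem integral_snr_closed_form (θ r d M : ℝ)
    (hθ : θ ∈ Set.Ioo (-(π / 2)) (π / 2)) (hr : r > 0) (hd : d > 0) (hM : M > 0) :
    ∫ x in (-(M * d / (2 * r)))..(M * d / (2 * r)), 1 / (1 - 2 * x * sin θ + x ^ 2) =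
      (1 / cos θ) * (arctan (M * d / (2 * r * cos θ) - tan θ) +
        arctan (M * d / (2 * r * cos θ) + tan θ)) :=
  integral_snr_closed_form_general θ r d M hθ
end

section
/- Let θ ∈ (−π/2, π/2), r > 0, d > 0, M > 0. Then the angular span satisfies the identity arctan (M*d/(2*r*cos θ) − tan θ) + arctan (M*d/(2*r*cos θ) + tan θ) = arctan ((M*d/2 * cos θ)/(r − M*d/2 * sin θ)) + arctan ((M*d/2 * cos θ)/(r + M*d/2 * sin θ)), provided r > (M*d/2)*|sin θ|. -/
/-!
Read `arctan (b / a)` with `a > 0` as the argument of `a + b i`. In the right half-plane arguments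
add under multiplication, so each side of the identity is the argument of a product of two such
numbers, and with `L = M d / 2`, `s = sin θ`, `c = cos θ` both products equal
`(r² - L²) + 2 L r c i` because `s² + c² = 1`.
-/

open Real

namespace Complex

lemma arg_eq_arctan_of_re_pos {z : ℂ} (hz : 0 < z.re) : arg z = Real.arctan (z.im / z.re) := by
  obtain ⟨hlow, hupp⟩ := abs_lt.1 (abs_arg_lt_pi_div_two_iff.2 (Or.inl hz))
  rw [← tan_arg, Real.arctan_tan hlow hupp]

lemma arg_mul_of_re_pos {z w : ℂ} (hz : 0 < z.re) (hw : 0 < w.re) :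
    arg (z * w) = arg z + arg w := by
  obtain ⟨hz₁, hz₂⟩ := abs_lt.1 (abs_arg_lt_pi_div_two_iff.2 (Or.inl hz))
  obtain ⟨hw₁, hw₂⟩ := abs_lt.1 (abs_arg_lt_pi_div_two_iff.2 (Or.inl hw))
  have hz₀ : z ≠ 0 := fun h ↦ by simp [h] at hz
  have hw₀ : w ≠ 0 := fun h ↦ by simp [h] at hw
  exact arg_mul hz₀ hw₀ ⟨by linarith, by linarith⟩

end Complex

lemma arctan_div_add_arctan_div {a b c e : ℝ} (ha : 0 < a) (hc : 0 < c) :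
    arctan (b / a) + arctan (e / c) = Complex.arg (⟨a, b⟩ * ⟨c, e⟩) := by
  rw [Complex.arg_mul_of_re_pos ha hc, Complex.arg_eq_arctan_of_re_pos ha,
    Complex.arg_eq_arctan_of_re_pos hc]

theorem angular_span_alternative_expression (θ r d M : ℝ)
    (hθ : θ ∈ Set.Ioo (-(π / 2)) (π / 2)) (hr : r > 0) (hd : d > 0) (hM : M > 0)
    (hsep : r > (M * d / 2) * |sin θ|) :
    arctan (M * d / (2 * r * cos θ) - tan θ) + arctan (M * d / (2 * r * cos θ) + tan θ) =
      arctan ((M * d / 2 * cos θ) / (r - M * d / 2 * sin θ)) +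
        arctan ((M * d / 2 * cos θ) / (r + M * d / 2 * sin θ)) := by
  have hc : 0 < cos θ := cos_pos_of_mem_Ioo hθ
  have hrc : 0 < r * cos θ := by positivity
  have hLs : |M * d / 2 * sin θ| < r := by
    rwa [abs_mul, abs_of_pos (by positivity : 0 < M * d / 2)]
  obtain ⟨hsub, hadd⟩ := abs_lt.1 hLs
  have hdiff : M * d / (2 * r * cos θ) - tan θ = (M * d / 2 - r * sin θ) / (r * cos θ) := by
    rw [tan_eq_sin_div_cos]; field_simp
  have hsum : M * d / (2 * r * cos θ) + tan θ = (M * d / 2 + r * sin θ) / (r * cos θ) := by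
    rw [tan_eq_sin_div_cos]; field_simp
  rw [hdiff, hsum, arctan_div_add_arctan_div hrc hrc,
    arctan_div_add_arctan_div (by linarith) (by linarith)]
  congr 1
  apply Complex.ext
  · simp only [Complex.mul_re]
    linear_combination (r ^ 2 + (M * d / 2) ^ 2) * sin_sq_add_cos_sq θ
  · simp only [Complex.mul_im]
    ring
end

section
/- Fix d > 0 and θ ∈ (−π/2, π/2). Define γ_SW(M, r) = (1/(d*r*cos θ)) * (arctan (M*d/(2*r*cos θ) − tan θ) + arctan (M*d/(2*r*cos θ) + tan θ)) and γ_UPW(M, r) = M/r². Then for fixed M, γ_SW(M, r)/γ_UPW(M, r) → 1 as r → ∞. -/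
/-! With `x = M d / (2 r cos θ)`, which tends to `0` as `r → ∞`, the ratio `γ_SW / γ_UPW` is
`F(x) / x / (2 cos² θ)` for `F(x) = arctan (x - tan θ) + arctan (x + tan θ)`. Since `F 0 = 0`,
`F(x) / x` tends to `F'(0) = 2 / (1 + tan² θ) = 2 cos² θ`, so the ratio tends to `1`. -/

open Real Filter Topology

lemma HasDerivAt.tendsto_div_self_nhdsNE_zero {f : ℝ → ℝ} {f' : ℝ} (hf : HasDerivAt f f' 0)
    (hf₀ : f 0 = 0) : Tendsto (fun x => f x / x) (𝓝[≠] 0) (𝓝 f') := by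
  simpa [hf₀, div_eq_inv_mul] using hasDerivAt_iff_tendsto_slope_zero.mp hf

lemma hasDerivAt_arctan_sub_add_arctan_add (t : ℝ) :
    HasDerivAt (fun x => arctan (x - t) + arctan (x + t)) (2 / (1 + t ^ 2)) 0 := by
  have hsub := ((hasDerivAt_id (0 : ℝ)).sub_const t).arctan
  have hadd := ((hasDerivAt_id (0 : ℝ)).add_const t).arctan
  refine (hsub.add hadd).congr_deriv ?_
  simp only [id, zero_sub, zero_add, neg_sq]
  ring

lemma tendsto_arctan_sub_add_arctan_add_div_self (t : ℝ) :
    Tendsto (fun x => (arctan (x - t) + arctan (x + t)) / x) (𝓝[≠] 0)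
      (𝓝 (2 / (1 + t ^ 2))) :=
  (hasDerivAt_arctan_sub_add_arctan_add t).tendsto_div_self_nhdsNE_zero <| by
    simp [arctan_neg]

lemma tendsto_const_div_atTop_nhdsNE_zero {c : ℝ} (hc : c ≠ 0) :
    Tendsto (fun r : ℝ => c / r) atTop (𝓝[≠] 0) :=
  tendsto_nhdsWithin_iff.mpr
    ⟨tendsto_const_nhds.div_atTop tendsto_id,
      (eventually_gt_atTop 0).mono fun _ hr => div_ne_zero hc hr.ne'⟩

theorem snr_ratio_tendsto_one (d θ M : ℝ) (hd : d > 0)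
    (hθ : θ ∈ Set.Ioo (-(π / 2)) (π / 2)) (hM : M > 0) :
    Tendsto (fun r : ℝ =>
        ((1 / (d * r * cos θ)) * (arctan (M * d / (2 * r * cos θ) - tan θ) +
          arctan (M * d / (2 * r * cos θ) + tan θ))) / (M / r ^ 2))
      atTop (nhds 1) := by
  have hcos : cos θ ≠ 0 := (cos_pos_of_mem_Ioo hθ).ne'
  have hc : M * d / (2 * cos θ) ≠ 0 := by positivity
  have hlim := ((tendsto_arctan_sub_add_arctan_add_div_self (tan θ)).comp
    (tendsto_const_div_atTop_nhdsNE_zero hc)).div_const (2 * cos θ ^ 2)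
  have hval : 2 / (1 + tan θ ^ 2) / (2 * cos θ ^ 2) = 1 := by
    rw [div_eq_mul_inv 2, inv_one_add_tan_sq hcos]
    field_simp
  rw [hval] at hlim
  refine hlim.congr' <| (eventually_gt_atTop 0).mono fun r hr => ?_
  simp only [Function.comp_apply, div_div]
  field_simp
end

section
/- For fixed r > D/2 > 0, the function θ ↦ η(r, θ) defined piecewise by η = (r² cos² θ)/(r² cos² θ + (r |sin θ| + D/2)²) if r|sin θ| ≤ D/2 and η = (r² cos² θ + (r |sin θ| − D/2)²)/(r² cos² θ + (r |sin θ| + D/2)²) otherwise, attains its minimum over θ ∈ [−π/2, π/2] at θ = ±π/2, where η = (r − D/2)²/(r + D/2)². -/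
open Real

noncomputable def eta (r D θ : ℝ) : ℝ :=
  if r * |sin θ| ≤ D / 2 then
    (r ^ 2 * cos θ ^ 2) / (r ^ 2 * cos θ ^ 2 + (r * |sin θ| + D / 2) ^ 2)
  else
    (r ^ 2 * cos θ ^ 2 + (r * |sin θ| - D / 2) ^ 2) /
      (r ^ 2 * cos θ ^ 2 + (r * |sin θ| + D / 2) ^ 2)

theorem power_ratio_min_at_endfire (r D : ℝ) (hD : D > 0) (hr : r > D / 2) :
    (∀ θ ∈ Set.Icc (-(π / 2)) (π / 2), eta r D θ ≥ eta r D (π / 2)) ∧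
    eta r D (π / 2) = (r - D / 2) ^ 2 / (r + D / 2) ^ 2 ∧
    eta r D (-(π / 2)) = (r - D / 2) ^ 2 / (r + D / 2) ^ 2 := by
  have hd : (0:ℝ) < D / 2 := by linarith
  have hrpos : (0:ℝ) < r := lt_trans hd hr
  have hval : eta r D (π / 2) = (r - D / 2) ^ 2 / (r + D / 2) ^ 2 := by
    simp only [eta, Real.sin_pi_div_two, Real.cos_pi_div_two, abs_one, mul_one]
    rw [if_neg (by linarith)]
    ring_nf
  have hvalneg : eta r D (-(π / 2)) = (r - D / 2) ^ 2 / (r + D / 2) ^ 2 := by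
    simp only [eta, Real.sin_neg, Real.cos_neg, Real.sin_pi_div_two,
      Real.cos_pi_div_two, abs_neg, abs_one, mul_one]
    rw [if_neg (by linarith)]
    ring_nf
  refine ⟨?_, hval, hvalneg⟩
  intro θ _
  rw [hval]
  set d := D / 2 with hdf
  set s := r * |sin θ| with hsf
  have hs0 : 0 ≤ s := mul_nonneg hrpos.le (abs_nonneg _)
  have hsr : s ≤ r := by
    have : |sin θ| ≤ 1 := abs_sin_le_one θ
    nlinarith
  have hc : r ^ 2 * cos θ ^ 2 = r ^ 2 - s ^ 2 := by
    have h1 : sin θ ^ 2 + cos θ ^ 2 = 1 := sin_sq_add_cos_sq θ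
    have h2 : |sin θ| ^ 2 = sin θ ^ 2 := sq_abs _
    rw [hsf]
    nlinarith
  have hden : 0 < r ^ 2 * cos θ ^ 2 + (s + d) ^ 2 := by nlinarith
  have hrd : 0 < (r + d) ^ 2 := by positivity
  unfold eta
  rw [← hsf, ← hdf]
  split_ifs with h
  · rw [ge_iff_le, div_le_div_iff₀ hrd hden, hc]
    have h' : 0 ≤ d - s := by linarith
    have h1 : (r - d) ^ 2 ≤ r ^ 2 := by nlinarith
    have hA0 : 0 ≤ 4 * r ^ 3 * d - d ^ 2 * (r - d) ^ 2 := by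
      have h2 : d ^ 2 * (r - d) ^ 2 ≤ d ^ 2 * r ^ 2 :=
        mul_le_mul_of_nonneg_left h1 (by positivity)
      nlinarith [mul_nonneg (mul_nonneg (mul_nonneg hd.le hrpos.le) hrpos.le)
        (sub_nonneg.2 hr.le)]
    have hAd : 0 ≤ (r - d) * (4 * r ^ 2 * d + 4 * d ^ 3) :=
      mul_nonneg (by linarith) (by positivity)
    nlinarith [mul_nonneg h' hA0, mul_nonneg hs0 hAd,
      mul_nonneg (mul_nonneg hs0 h') hrd.le]
  · rw [ge_iff_le, div_le_div_iff₀ hrd hden]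
    nlinarith [mul_nonneg (sub_nonneg.2 hsr) hd.le, sq_nonneg (r - d), sq_nonneg (r + d),
      mul_nonneg (mul_nonneg (sub_nonneg.2 hsr) hd.le) (sq_nonneg r),
      mul_nonneg (mul_nonneg (sub_nonneg.2 hsr) hd.le) (sq_nonneg d)]
end
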